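/- With C(z1,…,zn) the n-point pairing sum built from C(z,z') = −1/(2(z−z')²), the reflection identity conj(C(z1,…,zn)) = C(1/z̄1, …, 1/z̄n) · Π_{i=1}^n (−1/z̄_i²) holds for distinct nonzero points z_i. -/
import Mathlib


/-- Two-point function of the derivative field. -/
noncomputable def C2 (z w : ℂ) : ℂ := -1 / (2 * (z - w) ^ 2)

/-- The `n`-point function as a sum over perfect pairings. -/
noncomputable def pairSum (n : ℕ) (z : Fin n → ℂ) : ℂ :=
  ∑ σ ∈ Finset.univ.filter
      (fun σ : Equiv.Perm (Fin n) => σ * σ = 1 ∧ ∀ i, σ i ≠ i),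
    ∏ i ∈ Finset.univ.filter (fun i => i < σ i), C2 (z i) (z (σ i))

lemma C2_reflect (z w : ℂ) (hz : z ≠ 0) (hw : w ≠ 0) (hne : z ≠ w) :
    (starRingEnd ℂ) (C2 z w)
      = C2 (1 / (starRingEnd ℂ) z) (1 / (starRingEnd ℂ) w)
        * ((-1 / ((starRingEnd ℂ) z) ^ 2) * (-1 / ((starRingEnd ℂ) w) ^ 2)) := by
  set a := (starRingEnd ℂ) z with ha
  set b := (starRingEnd ℂ) w with hb
  have ha0 : a ≠ 0 := by simpa [ha] using hz
  have hb0 : b ≠ 0 := by simpa [hb] using hw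
  have hab : a ≠ b := fun h => hne ((starRingEnd ℂ).injective h)
  have hab' : a - b ≠ 0 := sub_ne_zero.mpr hab
  have hL : (starRingEnd ℂ) (C2 z w) = C2 a b := by
    simp [C2, map_div₀, ha, hb, map_ofNat]
  have hstep : C2 (1 / a) (1 / b) = C2 a b * (a ^ 2 * b ^ 2) := by
    unfold C2
    have hba : b - a ≠ 0 := sub_ne_zero.mpr (Ne.symm hab)
    field_simp
    ring
  have hcancel : a ^ 2 * b ^ 2 * ((-1 / a ^ 2) * (-1 / b ^ 2)) = 1 := by
    field_simp
  rw [hL, hstep, mul_assoc, hcancel, mul_one]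

lemma pair_prod (n : ℕ) (σ : Equiv.Perm (Fin n)) (hinv : σ * σ = 1)
    (hfix : ∀ i, σ i ≠ i) (g : Fin n → ℂ) :
    ∏ i ∈ Finset.univ.filter (fun i => i < σ i), (g i * g (σ i)) = ∏ i : Fin n, g i := by
  have hσσ : ∀ i, σ (σ i) = i := fun i => by
    have := congrArg (fun τ : Equiv.Perm (Fin n) => τ i) hinv
    simpa using this
  rw [Finset.prod_mul_distrib]
  have h2 : ∏ i ∈ Finset.univ.filter (fun i => i < σ i), g (σ i)
      = ∏ i ∈ Finset.univ.filter (fun i => ¬ i < σ i), g i := by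
    refine Finset.prod_bij (fun i _ => σ i) ?_ ?_ ?_ ?_
    · intro i hi
      simp only [Finset.mem_filter, Finset.mem_univ, true_and] at hi ⊢
      rw [hσσ]; exact not_lt.mpr hi.le
    · intro i hi j hj h
      exact σ.injective h
    · intro j hj
      simp only [Finset.mem_filter, Finset.mem_univ, true_and] at hj
      refine ⟨σ j, ?_, hσσ j⟩
      simp only [Finset.mem_filter, Finset.mem_univ, true_and, hσσ]
      exact lt_of_le_of_ne (not_lt.mp hj) (hfix j)
    · intro i hi; rfl
  rw [h2, Finset.prod_filter_mul_prod_filter_not]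

/-- Reflection identity:
`conj C(z1,…,zn) = C(1/z̄1,…,1/z̄n) · Π_i (-1/z̄_i²)` for distinct nonzero points. -/
theorem stmt14 (n : ℕ) (z : Fin n → ℂ) (hz : Function.Injective z)
    (h0 : ∀ i, z i ≠ 0) :
    (starRingEnd ℂ) (pairSum n z)
      = pairSum n (fun i => 1 / (starRingEnd ℂ) (z i))
        * ∏ i : Fin n, (-1 / ((starRingEnd ℂ) (z i)) ^ 2) := by
  unfold pairSum
  rw [map_sum, Finset.sum_mul]
  refine Finset.sum_congr rfl ?_
  intro σ hσ
  simp only [Finset.mem_filter, Finset.mem_univ, true_and] at hσ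
  obtain ⟨hinv, hfix⟩ := hσ
  rw [map_prod]
  have key : ∀ i ∈ Finset.univ.filter (fun i => i < σ i),
      (starRingEnd ℂ) (C2 (z i) (z (σ i)))
        = C2 (1 / (starRingEnd ℂ) (z i)) (1 / (starRingEnd ℂ) (z (σ i)))
          * ((-1 / ((starRingEnd ℂ) (z i)) ^ 2) * (-1 / ((starRingEnd ℂ) (z (σ i))) ^ 2)) := by
    intro i hi
    simp only [Finset.mem_filter, Finset.mem_univ, true_and] at hi
    exact C2_reflect _ _ (h0 i) (h0 (σ i)) (fun h => hfix i (hz h).symm)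
  rw [Finset.prod_congr rfl key, Finset.prod_mul_distrib,
    pair_prod n σ hinv hfix (fun i => -1 / ((starRingEnd ℂ) (z i)) ^ 2)]
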